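/- arXiv:2410.17796 — 3 statements merged into one kernel-verified Lean document; each statement's English description precedes it below -/
import Mathlib

section
/- Let M₁, M₂ be positive semidefinite symmetric p×p matrices and m ∈ [0,1]. Then the operator norm satisfies ‖M₁^m M₂^m‖ ≤ ‖M₁M₂‖^m (Cordes inequality). -/
/-!
Put `A = M₁`, `B = M₂` and `g m = ‖A^m B^m‖`. The function `g` is midpoint log-convex on `[0, 1]`:
for `u = (s + t) / 2`, `g u ^ 2 = ‖(A^u B^u)ᴴ (A^u B^u)‖` is the spectral radius of
`B^u A^s A^t B^u`, and since `xy` and `yx` have the same nonzero spectrum this equals the spectral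
radius of `(A^t B^t) (B^s A^s)`, which is at most `g t * g s`. As `g 0 ≤ 1` and `g 1 = ‖AB‖`,
induction gives `g m ≤ ‖AB‖^m` for dyadic `m`, and continuity of `g` on `(0, 1]` does the rest.
-/

open Matrix

/-- The m-th power of a Hermitian matrix, defined via its spectral decomposition. -/
noncomputable def herPow {p : ℕ} (M : Matrix (Fin p) (Fin p) ℝ) (hM : M.IsHermitian) (m : ℝ) :
    Matrix (Fin p) (Fin p) ℝ :=
  (hM.eigenvectorUnitary : Matrix (Fin p) (Fin p) ℝ) *
    Matrix.diagonal (fun i => hM.eigenvalues i ^ m) *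
    star (hM.eigenvectorUnitary : Matrix (Fin p) (Fin p) ℝ)

/-- The operator (spectral) norm of a square real matrix. -/
noncomputable def opNorm {p : ℕ} (M : Matrix (Fin p) (Fin p) ℝ) : ℝ :=
  ‖Matrix.toEuclideanCLM (𝕜 := ℝ) M‖

open Filter Topology Set Unitary

theorem spectralRadius_mul_comm {𝕜 A : Type*} [NormedField 𝕜] [Ring A] [Algebra 𝕜 A] (a b : A) :
    spectralRadius 𝕜 (a * b) = spectralRadius 𝕜 (b * a) := by
  suffices key : ∀ x y : A, spectralRadius 𝕜 (x * y) ≤ spectralRadius 𝕜 (y * x) from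
    le_antisymm (key a b) (key b a)
  intro x y
  refine iSup₂_le fun k hk => ?_
  rcases eq_or_ne k 0 with rfl | hk0
  · simp
  · have hk' : k ∈ spectrum 𝕜 (x * y) \ {0} := ⟨hk, hk0⟩
    rw [spectrum.nonzero_mul_comm] at hk'
    exact le_iSup₂ (f := fun k (_ : k ∈ spectrum 𝕜 (y * x)) => (‖k‖₊ : ENNReal)) k hk'.1

namespace ContinuousLinearMap

variable {𝕜 E : Type*} [RCLike 𝕜] [NormedAddCommGroup E] [InnerProductSpace 𝕜 E] [CompleteSpace E]

theorem norm_mul_sq_le_of_mul_self_eq {a b a₁ a₂ b₁ b₂ : E →L[𝕜] E}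
    (ha : IsSelfAdjoint a) (hb : IsSelfAdjoint b) (ha₁ : IsSelfAdjoint a₁) (hb₁ : IsSelfAdjoint b₁)
    (haa : a * a = a₁ * a₂) (hbb : b * b = b₂ * b₁) :
    ‖a * b‖ ^ 2 ≤ ‖a₁ * b₁‖ * ‖a₂ * b₂‖ := by
  nontriviality E
  have hstar : star (a * b) * (a * b) = b * (a₁ * a₂ * b) := by
    rw [star_mul, ha.star_eq, hb.star_eq, mul_assoc, ← mul_assoc a a b, haa, mul_assoc]
  have hrot : spectralRadius 𝕜 (b * (a₁ * a₂ * b)) = spectralRadius 𝕜 (a₂ * b₂ * (b₁ * a₁)) :=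
    calc spectralRadius 𝕜 (b * (a₁ * a₂ * b))
        = spectralRadius 𝕜 (a₁ * (a₂ * b₂ * b₁)) := by
          rw [spectralRadius_mul_comm, mul_assoc, mul_assoc, hbb, mul_assoc]
      _ = spectralRadius 𝕜 (a₂ * b₂ * (b₁ * a₁)) := by
          rw [spectralRadius_mul_comm, mul_assoc (a₂ * b₂)]
  have hb₁a₁ : ‖b₁ * a₁‖ = ‖a₁ * b₁‖ := by
    rw [← norm_star, star_mul, ha₁.star_eq, hb₁.star_eq]
  have key : (‖star (a * b) * (a * b)‖₊ : ENNReal) ≤ ‖a₂ * b₂ * (b₁ * a₁)‖₊ := by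
    rw [← spectralRadius_eq_nnnorm _ (.star_mul_self (a * b)), hstar, hrot]
    exact spectrum.spectralRadius_le_nnnorm _
  have key' : ‖star (a * b) * (a * b)‖ ≤ ‖a₂ * b₂ * (b₁ * a₁)‖ := by exact_mod_cast key
  calc ‖a * b‖ ^ 2 = ‖star (a * b) * (a * b)‖ := by
        rw [sq]; exact CStarRing.norm_star_mul_self.symm
    _ ≤ ‖a₂ * b₂‖ * ‖b₁ * a₁‖ := key'.trans (norm_mul_le _ _)
    _ = ‖a₁ * b₁‖ * ‖a₂ * b₂‖ := by rw [hb₁a₁, mul_comm]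

end ContinuousLinearMap

section MidpointLogConvex

variable {g : ℝ → ℝ} {c : ℝ}

theorem le_rpow_dyadic_of_sq_midpoint_le (hc : 0 ≤ c) (hg : ∀ x ∈ Icc (0 : ℝ) 1, 0 ≤ g x)
    (h0 : g 0 ≤ 1) (h1 : g 1 ≤ c)
    (hmid : ∀ s ∈ Icc (0 : ℝ) 1, ∀ t ∈ Icc (0 : ℝ) 1, g ((s + t) / 2) ^ 2 ≤ g s * g t)
    (n k : ℕ) (hk : k ≤ 2 ^ n) : g (k / 2 ^ n) ≤ c ^ ((k : ℝ) / 2 ^ n) := by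
  induction n generalizing k with
  | zero =>
    interval_cases k <;> simpa
  | succ n ih =>
    have dyadic_mem : ∀ j : ℕ, j ≤ 2 ^ n → (j : ℝ) / 2 ^ n ∈ Icc (0 : ℝ) 1 := fun j hj =>
      ⟨by positivity, div_le_one_of_le₀ (by exact_mod_cast hj) (by positivity)⟩
    obtain ⟨a, b, ha, hb, rfl⟩ : ∃ a b, a ≤ 2 ^ n ∧ b ≤ 2 ^ n ∧ k = a + b :=
      ⟨k / 2, k - k / 2, by omega, by omega, by omega⟩
    set s : ℝ := a / 2 ^ n
    set t : ℝ := b / 2 ^ n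
    have hu : ((a + b : ℕ) : ℝ) / 2 ^ (n + 1) = (s + t) / 2 := by
      push_cast; rw [pow_succ]; ring
    have hsq : g ((s + t) / 2) ^ 2 ≤ (c ^ ((s + t) / 2)) ^ 2 :=
      calc g ((s + t) / 2) ^ 2 ≤ g s * g t := hmid s (dyadic_mem a ha) t (dyadic_mem b hb)
        _ ≤ c ^ s * c ^ t := mul_le_mul (ih a ha) (ih b hb) (hg t (dyadic_mem b hb)) (by positivity)
        _ = (c ^ ((s + t) / 2)) ^ 2 := by
          rw [← Real.rpow_natCast, ← Real.rpow_mul hc, ← Real.rpow_add_of_nonneg hc]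
          · norm_num
          all_goals positivity
    rw [hu]
    exact (pow_le_pow_iff_left₀ (hg _ ⟨by positivity, by
      linarith [(dyadic_mem a ha).2, (dyadic_mem b hb).2]⟩) (by positivity) two_ne_zero).mp hsq

theorem le_rpow_of_sq_midpoint_le (hc : 0 ≤ c) (hg : ∀ x ∈ Icc (0 : ℝ) 1, 0 ≤ g x)
    (h0 : g 0 ≤ 1) (h1 : g 1 ≤ c)
    (hmid : ∀ s ∈ Icc (0 : ℝ) 1, ∀ t ∈ Icc (0 : ℝ) 1, g ((s + t) / 2) ^ 2 ≤ g s * g t)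
    (hcont : ContinuousOn g (Ioc 0 1)) {m : ℝ} (hm : m ∈ Icc (0 : ℝ) 1) : g m ≤ c ^ m := by
  rcases hm.1.eq_or_lt with rfl | hm0
  · simpa using h0
  set d : ℕ → ℝ := fun n => ⌈m * 2 ^ n⌉₊ / 2 ^ n
  have hd_mem : ∀ n, d n ∈ Icc m 1 := fun n => by
    have h2n : (0 : ℝ) < 2 ^ n := by positivity
    refine ⟨(le_div_iff₀ h2n).mpr (Nat.le_ceil _), div_le_one_of_le₀ ?_ h2n.le⟩
    have hk : ⌈m * 2 ^ n⌉₊ ≤ 2 ^ n :=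
      Nat.ceil_le.mpr (by exact_mod_cast mul_le_of_le_one_left h2n.le hm.2)
    exact_mod_cast hk
  have hd : Tendsto d atTop (𝓝[Ioc 0 1] m) := by
    refine tendsto_nhdsWithin_iff.mpr ⟨?_, Eventually.of_forall fun n =>
      ⟨hm0.trans_le (hd_mem n).1, (hd_mem n).2⟩⟩
    exact (tendsto_nat_ceil_mul_div_atTop hm.1).comp
      (tendsto_pow_atTop_atTop_of_one_lt one_lt_two)
  refine le_of_tendsto_of_tendsto' ((hcont m ⟨hm0, hm.2⟩).tendsto.comp hd)
    ((Real.continuousAt_const_rpow' hm0.ne').tendsto.comp (tendsto_nhdsWithin_iff.mp hd).1)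
    fun n => ?_
  obtain ⟨k, hk, hdk⟩ : ∃ k : ℕ, k ≤ 2 ^ n ∧ d n = k / 2 ^ n :=
    ⟨_, by exact_mod_cast (div_le_one (by positivity)).mp (hd_mem n).2, rfl⟩
  simp only [Function.comp_apply, hdk]
  exact le_rpow_dyadic_of_sq_midpoint_le hc hg h0 h1 hmid n k hk

end MidpointLogConvex

namespace Matrix.IsHermitian

variable {p : ℕ} {M : Matrix (Fin p) (Fin p) ℝ}

noncomputable def spectralAlgHom (hM : M.IsHermitian) :
    (Fin p → ℝ) →ₐ[ℝ] Matrix (Fin p) (Fin p) ℝ :=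
  (conjStarAlgAut ℝ _ hM.eigenvectorUnitary).toAlgEquiv.toAlgHom.comp (diagonalAlgHom ℝ)

theorem continuous_spectralAlgHom (hM : M.IsHermitian) : Continuous hM.spectralAlgHom :=
  hM.spectralAlgHom.toLinearMap.continuous_of_finiteDimensional

theorem isSelfAdjoint_spectralAlgHom (hM : M.IsHermitian) (d : Fin p → ℝ) :
    IsSelfAdjoint (hM.spectralAlgHom d) :=
  (isHermitian_diagonal d).isSelfAdjoint.map (conjStarAlgAut ℝ _ hM.eigenvectorUnitary)

end Matrix.IsHermitian

section herPow

variable {p : ℕ} {M : Matrix (Fin p) (Fin p) ℝ}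

theorem herPow_eq_spectralAlgHom (hM : M.IsHermitian) (m : ℝ) :
    herPow M hM m = hM.spectralAlgHom fun i => hM.eigenvalues i ^ m :=
  rfl

theorem herPow_zero (hM : M.IsHermitian) : herPow M hM 0 = 1 := by
  simp [herPow_eq_spectralAlgHom, ← Pi.one_def]

theorem herPow_one (hM : M.IsHermitian) : herPow M hM 1 = M := by
  conv_rhs => rw [hM.spectral_theorem]
  simp [herPow_eq_spectralAlgHom, Matrix.IsHermitian.spectralAlgHom]

theorem isSelfAdjoint_herPow (hM : M.IsHermitian) (m : ℝ) : IsSelfAdjoint (herPow M hM m) :=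
  hM.isSelfAdjoint_spectralAlgHom _

theorem herPow_mul_herPow (hM : M.PosSemidef) {s t : ℝ} (hs : 0 ≤ s) (ht : 0 ≤ t) :
    herPow M hM.1 s * herPow M hM.1 t = herPow M hM.1 (s + t) := by
  simp only [herPow_eq_spectralAlgHom, ← map_mul]
  congr 1
  funext i
  exact (Real.rpow_add_of_nonneg (hM.eigenvalues_nonneg i) hs ht).symm

theorem continuousAt_herPow (hM : M.IsHermitian) {m : ℝ} (hm : m ≠ 0) :
    ContinuousAt (herPow M hM) m :=
  hM.continuous_spectralAlgHom.continuousAt.comp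
    (continuousAt_pi.mpr fun _ => Real.continuousAt_const_rpow' hm)

end herPow

open scoped Matrix.Norms.L2Operator in
theorem continuous_opNorm {p : ℕ} : Continuous (opNorm : Matrix (Fin p) (Fin p) ℝ → ℝ) :=
  continuous_norm

theorem opNorm_one_le {p : ℕ} : opNorm (1 : Matrix (Fin p) (Fin p) ℝ) ≤ 1 := by
  rw [opNorm, map_one]
  exact ContinuousLinearMap.norm_id_le

theorem opNorm_herPow_mul_herPow_midpoint_sq_le {p : ℕ} {M₁ M₂ : Matrix (Fin p) (Fin p) ℝ}
    (h₁ : M₁.PosSemidef) (h₂ : M₂.PosSemidef) {s t : ℝ} (hs : 0 ≤ s) (ht : 0 ≤ t) :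
    opNorm (herPow M₁ h₁.1 ((s + t) / 2) * herPow M₂ h₂.1 ((s + t) / 2)) ^ 2 ≤
      opNorm (herPow M₁ h₁.1 s * herPow M₂ h₂.1 s) *
        opNorm (herPow M₁ h₁.1 t * herPow M₂ h₂.1 t) := by
  have hu : 0 ≤ (s + t) / 2 := by positivity
  have selfAdjoint : ∀ {M : Matrix (Fin p) (Fin p) ℝ} (hM : M.IsHermitian) (m : ℝ),
      IsSelfAdjoint (toEuclideanCLM (𝕜 := ℝ) (herPow M hM m)) :=
    fun hM m => (isSelfAdjoint_herPow hM m).map _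
  simp only [opNorm, map_mul]
  refine ContinuousLinearMap.norm_mul_sq_le_of_mul_self_eq (selfAdjoint h₁.1 _)
    (selfAdjoint h₂.1 _) (selfAdjoint h₁.1 s) (selfAdjoint h₂.1 s) ?_ ?_
  · rw [← map_mul, ← map_mul, herPow_mul_herPow h₁ hu hu, herPow_mul_herPow h₁ hs ht, add_halves]
  · rw [← map_mul, ← map_mul, herPow_mul_herPow h₂ hu hu, herPow_mul_herPow h₂ ht hs, add_halves,
      add_comm]

/-- Cordes inequality: for positive semidefinite symmetric M₁, M₂ and m ∈ [0,1],
`‖M₁^m M₂^m‖ ≤ ‖M₁M₂‖^m`. -/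
theorem stmt2 (p : ℕ) (M₁ M₂ : Matrix (Fin p) (Fin p) ℝ)
    (h₁ : M₁.PosSemidef) (h₂ : M₂.PosSemidef) (m : ℝ) (hm : m ∈ Set.Icc (0 : ℝ) 1) :
    opNorm (herPow M₁ h₁.1 m * herPow M₂ h₂.1 m) ≤ opNorm (M₁ * M₂) ^ m := by
  refine le_rpow_of_sq_midpoint_le (g := fun m => opNorm (herPow M₁ h₁.1 m * herPow M₂ h₂.1 m))
    (c := opNorm (M₁ * M₂)) (norm_nonneg _) (fun _ _ => norm_nonneg _) ?_ ?_ ?_ ?_ hm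
  · simpa [herPow_zero] using opNorm_one_le
  · simp only [herPow_one, le_refl]
  · exact fun s hs t ht => opNorm_herPow_mul_herPow_midpoint_sq_le h₁ h₂ hs.1 ht.1
  · exact fun m hm => (continuous_opNorm.continuousAt.comp ((continuousAt_herPow h₁.1 hm.1.ne').mul
      (continuousAt_herPow h₂.1 hm.1.ne'))).continuousWithinAt
end

section
/- Let Σ ∈ ℝ^{p×p} be diagonal positive definite with diagonal λ₁ ≥ ... ≥ λ_p > 0, let X ∈ ℝ^{n×p} with n < p, λ ≥ 0, s > 0, and P_λ := Xᵀ(XXᵀ + nλI_n)⁻¹X. Then sup over θ* with ‖θ*‖_{Σ^{1−s}} ≤ 1 of ‖(I_p − P_λ)θ*‖²_Σ is at least λ_{n+1}^s. -/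
/-!
A nonzero vector θ in the kernel of X supported on the first n + 1 coordinates exists since
n < p; on such vectors P_λ vanishes, so ‖(I − P_λ)θ‖²_Σ = ‖θ‖²_Σ. On its support
λ_i ≥ λ_{n+1}, hence λ_i = λ_i^s λ_i^{1−s} ≥ λ_{n+1}^s λ_i^{1−s}, which gives
‖θ‖²_Σ ≥ λ_{n+1}^s ‖θ‖²_{Σ^{1−s}}; normalise θ. The constraint set is compact, so the
supremum is a genuine one and not the junk value of an unbounded `sSup`.
-/

open Matrix

lemma Matrix.exists_ne_zero_mulVec_eq_zero_of_lt {K : Type*} [Field K] {m p : ℕ}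
    (X : Matrix (Fin m) (Fin p) K) (hmp : m < p) :
    ∃ θ : Fin p → K, θ ≠ 0 ∧ X *ᵥ θ = 0 ∧ ∀ i : Fin p, θ i ≠ 0 → (i : ℕ) ≤ m := by
  set E := Function.ExtendByZero.linearMap K (Fin.castLE hmp : Fin (m + 1) → Fin p)
  have hker : LinearMap.ker (X.mulVecLin ∘ₗ E) ≠ ⊥ :=
    LinearMap.ker_ne_bot_of_finrank_lt (by simp)
  obtain ⟨v, hv, hv0⟩ := Submodule.exists_mem_ne_zero_of_ne_bot hker
  refine ⟨E v, fun h => hv0 ?_, hv, fun i hi => ?_⟩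
  · exact Function.extend_injective (Fin.castLE_injective hmp) 0 (h.trans (map_zero E).symm)
  · by_contra! hmi
    refine hi (Function.extend_apply' _ _ _ ?_)
    rintro ⟨k, rfl⟩
    exact absurd k.is_lt (by simpa using hmi)

section Diagonal

variable {ι : Type*} [Fintype ι] [DecidableEq ι]

lemma dotProduct_diagonal_mulVec_self {R : Type*} [CommSemiring R] (d w : ι → R) :
    w ⬝ᵥ (diagonal d *ᵥ w) = ∑ i, d i * w i ^ 2 := by
  simp only [dotProduct, mulVec_diagonal]
  exact Finset.sum_congr rfl fun i _ => by ring

lemma rpow_mul_dotProduct_diagonal_rpow_le {d θ : ι → ℝ} {c s : ℝ} (hc : 0 ≤ c) (hs : 0 ≤ s)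
    (hθ : ∀ i, θ i ≠ 0 → c ≤ d i) :
    c ^ s * (θ ⬝ᵥ (diagonal (fun i => d i ^ (1 - s)) *ᵥ θ)) ≤ θ ⬝ᵥ (diagonal d *ᵥ θ) := by
  rw [dotProduct_diagonal_mulVec_self, dotProduct_diagonal_mulVec_self, Finset.mul_sum]
  refine Finset.sum_le_sum fun i _ => ?_
  by_cases hi : θ i = 0
  · simp [hi]
  have hd : 0 ≤ d i := hc.trans (hθ i hi)
  calc c ^ s * (d i ^ (1 - s) * θ i ^ 2) ≤ d i ^ s * d i ^ (1 - s) * θ i ^ 2 := by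
        rw [← mul_assoc]; gcongr; exact hθ i hi
    _ = d i * θ i ^ 2 := by rw [← Real.rpow_add' hd (by norm_num), add_sub_cancel, Real.rpow_one]

lemma isCompact_setOf_dotProduct_diagonal_mulVec_le {e : ι → ℝ} (he : ∀ i, 0 < e i) (r : ℝ) :
    IsCompact {θ : ι → ℝ | θ ⬝ᵥ (diagonal e *ᵥ θ) ≤ r} := by
  refine (isCompact_univ_pi fun i => isCompact_Icc (a := -√(r / e i)) (b := √(r / e i)))
    |>.of_isClosed_subset (isClosed_le (by fun_prop) continuous_const) fun θ hθ i _ => ?_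
  rw [Set.mem_ofPred_eq, dotProduct_diagonal_mulVec_self] at hθ
  have hterm : e i * θ i ^ 2 ≤ r :=
    (Finset.single_le_sum (fun j _ => by have := he j; positivity) (Finset.mem_univ i)).trans hθ
  exact abs_le.mp (Real.abs_le_sqrt ((le_div_iff₀' (he i)).mpr hterm))

end Diagonal

theorem stmt14_general (n p : ℕ) (hnp : n < p) (d : Fin p → ℝ)
    (hpos : ∀ i, 0 < d i) (hanti : Antitone d)
    (X : Matrix (Fin n) (Fin p) ℝ) (lam : ℝ) (s : ℝ) (hs : 0 < s) :
    d ⟨n, hnp⟩ ^ s ≤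
      sSup ((fun θ : Fin p → ℝ =>
          (θ - Xᵀ *ᵥ ((X * Xᵀ + ((n : ℝ) * lam) • 1)⁻¹ *ᵥ (X *ᵥ θ))) ⬝ᵥ
            (Matrix.diagonal d *ᵥ
              (θ - Xᵀ *ᵥ ((X * Xᵀ + ((n : ℝ) * lam) • 1)⁻¹ *ᵥ (X *ᵥ θ))))) ''
        {θ : Fin p → ℝ | θ ⬝ᵥ (Matrix.diagonal (fun i => d i ^ (1 - s)) *ᵥ θ) ≤ 1}) := by
  obtain ⟨θ₀, hθ₀, hXθ₀, hsupp⟩ := X.exists_ne_zero_mulVec_eq_zero_of_lt hnp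
  set D := diagonal fun i => d i ^ (1 - s)
  have hc : 0 < θ₀ ⬝ᵥ (D *ᵥ θ₀) :=
    (posDef_diagonal_iff.mpr fun i => Real.rpow_pos_of_pos (hpos i) _).dotProduct_mulVec_pos hθ₀
  set θ := (√(θ₀ ⬝ᵥ (D *ᵥ θ₀)))⁻¹ • θ₀
  have hθ : θ ⬝ᵥ (D *ᵥ θ) = 1 := by
    rw [mulVec_smul, dotProduct_smul, smul_dotProduct, smul_smul, smul_eq_mul, ← sq,
      inv_pow, Real.sq_sqrt hc.le, inv_mul_cancel₀ hc.ne']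
  have hXθ : X *ᵥ θ = 0 := by rw [mulVec_smul, hXθ₀, smul_zero]
  have hθd : ∀ i, θ i ≠ 0 → d ⟨n, hnp⟩ ≤ d i := fun i hi =>
    hanti (Fin.le_def.mpr (hsupp i (right_ne_zero_of_mul hi)))
  refine le_csSup_of_le ((isCompact_setOf_dotProduct_diagonal_mulVec_le
    (fun i => Real.rpow_pos_of_pos (hpos i) (1 - s)) 1).bddAbove_image
    (Continuous.continuousOn ?_)) ⟨θ, hθ.le, rfl⟩ ?_
  · fun_prop
  simp only [hXθ, mulVec_zero, sub_zero]
  calc d ⟨n, hnp⟩ ^ s = d ⟨n, hnp⟩ ^ s * (θ ⬝ᵥ (D *ᵥ θ)) := by rw [hθ, mul_one]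
    _ ≤ θ ⬝ᵥ (diagonal d *ᵥ θ) := rpow_mul_dotProduct_diagonal_rpow_le (hpos _).le hs.le hθd

/-- With Σ diagonal with decreasing positive entries, n < p, λ ≥ 0, s > 0 and
P_λ := Xᵀ(XXᵀ + nλI_n)⁻¹X, the supremum of ‖(I_p − P_λ)θ*‖²_Σ over θ* with
‖θ*‖_{Σ^{1−s}} ≤ 1 is at least λ_{n+1}^s. -/
theorem stmt14 (n p : ℕ) (hnp : n < p) (d : Fin p → ℝ)
    (hpos : ∀ i, 0 < d i) (hanti : Antitone d)
    (X : Matrix (Fin n) (Fin p) ℝ) (lam : ℝ) (hlam : 0 ≤ lam) (s : ℝ) (hs : 0 < s) :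
    d ⟨n, hnp⟩ ^ s ≤
      sSup ((fun θ : Fin p → ℝ =>
          (θ - Xᵀ *ᵥ ((X * Xᵀ + ((n : ℝ) * lam) • 1)⁻¹ *ᵥ (X *ᵥ θ))) ⬝ᵥ
            (Matrix.diagonal d *ᵥ
              (θ - Xᵀ *ᵥ ((X * Xᵀ + ((n : ℝ) * lam) • 1)⁻¹ *ᵥ (X *ᵥ θ))))) ''
        {θ : Fin p → ℝ | θ ⬝ᵥ (Matrix.diagonal (fun i => d i ^ (1 - s)) *ᵥ θ) ≤ 1}) :=
  stmt14_general n p hnp d hpos hanti X lam s hs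
end

section
/- Suppose (η_k)_{k=1}^p are nonnegative random variables and (t_k)_{k=1}^p nonnegative reals, at least one strictly positive, such that for some δ ∈ (0, 1/2), with probability at least 1 − δ it holds that η_k ≥ t_k for every single fixed k (individually, not jointly). Then with probability at least 1 − 2δ, Σ_{k=1}^p η_k ≥ (1/2) Σ_{k=1}^p t_k. -/
open MeasureTheory

/-- If each nonnegative random variable η_k satisfies η_k ≥ t_k with probability
at least 1 − δ individually, with t_k ≥ 0 not all zero and δ ∈ (0, 1/2), then with probability
at least 1 − 2δ we have ∑_k η_k ≥ (1/2) ∑_k t_k. -/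
theorem stmt16 (p : ℕ) {Ω : Type*} [MeasurableSpace Ω]
    (μ : Measure Ω) [IsProbabilityMeasure μ]
    (η : Fin p → Ω → ℝ) (hmeas : ∀ k, Measurable (η k))
    (hnonneg : ∀ k ω, 0 ≤ η k ω)
    (t : Fin p → ℝ) (ht0 : ∀ k, 0 ≤ t k) (htpos : ∃ k, 0 < t k)
    (δ : ℝ) (hδ : δ ∈ Set.Ioo (0 : ℝ) (1 / 2))
    (h : ∀ k, ENNReal.ofReal (1 - δ) ≤ μ {ω | t k ≤ η k ω}) :
    ENNReal.ofReal (1 - 2 * δ) ≤ μ {ω | (1 / 2) * ∑ k, t k ≤ ∑ k, η k ω} := by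
  obtain ⟨hδ0, hδhalf⟩ := hδ
  set T := ∑ k, t k with hT
  have hTpos : 0 < T := by
    obtain ⟨k0, hk0⟩ := htpos
    exact Finset.sum_pos' (fun k _ => ht0 k) ⟨k0, Finset.mem_univ _, hk0⟩
  set g : Ω → ℝ := fun ω => ∑ k, if η k ω < t k then t k else 0 with hg
  have hgnn : ∀ ω, 0 ≤ g ω := by
    intro ω
    refine Finset.sum_nonneg fun k _ => ?_
    split_ifs
    exacts [ht0 k, le_rfl]
  have hgmeas : Measurable g :=
    Finset.measurable_sum _ fun k _ =>
      Measurable.ite (measurableSet_lt (hmeas k) measurable_const) measurable_const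
        measurable_const
  have hμk : ∀ k, μ {ω | η k ω < t k} ≤ ENNReal.ofReal δ := by
    intro k
    have hc : {ω | η k ω < t k} = {ω | t k ≤ η k ω}ᶜ := by
      ext ω; simp [not_le]
    rw [hc, measure_compl (measurableSet_le measurable_const (hmeas k)) (measure_ne_top μ _),
      measure_univ]
    calc 1 - μ {ω | t k ≤ η k ω} ≤ 1 - ENNReal.ofReal (1 - δ) := tsub_le_tsub_left (h k) 1
      _ = ENNReal.ofReal δ := by
          rw [← ENNReal.ofReal_one, ← ENNReal.ofReal_sub _ (by linarith)]
          norm_num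
  have hrep : ∀ ω, ENNReal.ofReal (g ω) =
      ∑ k, Set.indicator {ω' | η k ω' < t k} (fun _ => ENNReal.ofReal (t k)) ω := by
    intro ω
    rw [hg]
    rw [ENNReal.ofReal_sum_of_nonneg (fun k _ => by split_ifs; exacts [ht0 k, le_rfl])]
    refine Finset.sum_congr rfl fun k _ => ?_
    by_cases hk : η k ω < t k <;> simp [Set.indicator_apply, hk]
  have hint : ∫⁻ ω, ENNReal.ofReal (g ω) ∂μ ≤ ENNReal.ofReal (δ * T) := by
    calc ∫⁻ ω, ENNReal.ofReal (g ω) ∂μ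
        = ∑ k, ENNReal.ofReal (t k) * μ {ω | η k ω < t k} := by
          simp_rw [hrep]
          rw [lintegral_finset_sum _ (fun k _ => Measurable.indicator measurable_const
            (measurableSet_lt (hmeas k) measurable_const))]
          refine Finset.sum_congr rfl fun k _ => ?_
          rw [lintegral_indicator_const (measurableSet_lt (hmeas k) measurable_const)]
      _ ≤ ∑ k, ENNReal.ofReal (t k) * ENNReal.ofReal δ :=
          Finset.sum_le_sum fun k _ => mul_le_mul_right (hμk k) _
      _ = ENNReal.ofReal T * ENNReal.ofReal δ := by
          rw [← Finset.sum_mul, ← ENNReal.ofReal_sum_of_nonneg (fun k _ => ht0 k)]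
      _ = ENNReal.ofReal (δ * T) := by
          rw [← ENNReal.ofReal_mul hTpos.le, mul_comm]
  -- Markov
  have hmark : μ {ω | T / 2 ≤ g ω} ≤ ENNReal.ofReal (2 * δ) := by
    have hset : {ω | T / 2 ≤ g ω} = {ω | ENNReal.ofReal (T / 2) ≤ ENNReal.ofReal (g ω)} := by
      ext ω
      simp [ENNReal.ofReal_le_ofReal_iff (hgnn ω)]
    rw [hset]
    calc μ {ω | ENNReal.ofReal (T / 2) ≤ ENNReal.ofReal (g ω)}
        ≤ (∫⁻ ω, ENNReal.ofReal (g ω) ∂μ) / ENNReal.ofReal (T / 2) :=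
          meas_ge_le_lintegral_div ((ENNReal.measurable_ofReal.comp hgmeas).aemeasurable)
            (ENNReal.ofReal_pos.2 (by positivity : (0:ℝ) < T / 2)).ne'
            ENNReal.ofReal_ne_top
      _ ≤ ENNReal.ofReal (δ * T) / ENNReal.ofReal (T / 2) :=
          ENNReal.div_le_div_right hint _
      _ = ENNReal.ofReal (2 * δ) := by
          rw [← ENNReal.ofReal_div_of_pos (by positivity)]
          congr 1
          field_simp
  -- the good event is contained in the target
  have hsub : {ω | T / 2 ≤ g ω}ᶜ ⊆ {ω | (1 / 2) * ∑ k, t k ≤ ∑ k, η k ω} := by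
    intro ω hω
    simp only [Set.mem_compl_iff, Set.mem_setOf_eq, not_le] at hω
    have key : ∑ k, η k ω ≥ T - g ω := by
      have h1 : ∀ k, t k - (if η k ω < t k then t k else 0) ≤ η k ω := by
        intro k
        split_ifs with hk
        · simpa using hnonneg k ω
        · simpa using not_lt.mp hk
      calc T - g ω = ∑ k, (t k - if η k ω < t k then t k else 0) := by
            rw [Finset.sum_sub_distrib]
        _ ≤ ∑ k, η k ω := Finset.sum_le_sum fun k _ => h1 k
    simp only [Set.mem_setOf_eq, ← hT]
    linarith
  calc ENNReal.ofReal (1 - 2 * δ)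
      ≤ μ {ω | T / 2 ≤ g ω}ᶜ := by
        rw [measure_compl (measurableSet_le measurable_const hgmeas) (measure_ne_top μ _),
          measure_univ]
        calc ENNReal.ofReal (1 - 2 * δ) = 1 - ENNReal.ofReal (2 * δ) := by
              rw [← ENNReal.ofReal_one, ← ENNReal.ofReal_sub _ (by linarith)]
          _ ≤ 1 - μ {ω | T / 2 ≤ g ω} := tsub_le_tsub_left hmark 1
    _ ≤ μ {ω | (1 / 2) * ∑ k, t k ≤ ∑ k, η k ω} := measure_mono hsub
end
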